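/- For a basic set D (a set of pairwise separate positive roots) and a choice φ = {λ_α}_{α∈D} of elementary character data, the basic character ξ_{D,φ} = ⊗_{α∈D} λ_α^U equals the monomial character (⊗_{α∈D} λ_α|_{V_D})^U, where V_D = ∩_{α∈D} V_α; in particular every basic character is induced from a linear character of a subgroup. -/

import Mathlib

open Matrix CategoryTheory
open scoped Classical

/-- A matrix is upper unitriangular: ones on the diagonal, zeros below. -/
def IsUnitriangular {n : ℕ} {F : Type} [Field F] (M : Matrix (Fin n) (Fin n) F) : Prop :=
  (∀ i, M i i = 1) ∧ ∀ ⦃i j : Fin n⦄, j < i → M i j = 0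

theorem IsUnitriangular.blockTriangular {n : ℕ} {F : Type} [Field F]
    {M : Matrix (Fin n) (Fin n) F} (h : IsUnitriangular M) : M.BlockTriangular id :=
  fun _ _ hij => h.2 hij

theorem IsUnitriangular.mul {n : ℕ} {F : Type} [Field F]
    {A B : Matrix (Fin n) (Fin n) F} (hA : IsUnitriangular A) (hB : IsUnitriangular B) :
    IsUnitriangular (A * B) := by
  constructor
  · intro i
    rw [Matrix.mul_apply, Finset.sum_eq_single i]
    · rw [hA.1, hB.1, one_mul]
    · intro k _ hk
      rcases lt_or_gt_of_ne hk with h | h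
      · rw [hA.2 h, zero_mul]
      · rw [hB.2 h, mul_zero]
    · simp
  · intro i j hij
    rw [Matrix.mul_apply]
    apply Finset.sum_eq_zero
    intro k _
    rcases le_or_gt k j with h | h
    · rw [hA.2 (lt_of_le_of_lt h hij), zero_mul]
    · rw [hB.2 h, mul_zero]

theorem IsUnitriangular.diag_of_mul_eq_one {n : ℕ} {F : Type} [Field F]
    {A B : Matrix (Fin n) (Fin n) F} (hBlow : ∀ ⦃i j : Fin n⦄, j < i → B i j = 0)
    (hA : IsUnitriangular A) (h : B * A = 1) : ∀ i, B i i = 1 := by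
  intro i
  have := congrArg (fun M => M i i) h
  simp only [Matrix.one_apply_eq] at this
  rw [Matrix.mul_apply, Finset.sum_eq_single i] at this
  · rwa [hA.1, mul_one] at this
  · intro k _ hk
    rcases lt_or_gt_of_ne hk with h' | h'
    · rw [hBlow h', zero_mul]
    · rw [hA.2 h', mul_zero]
  · simp

/-- The group `U_n(q)` of upper unitriangular matrices, as a subgroup of `GL n F`. -/
def UT (n : ℕ) (F : Type) [Field F] : Subgroup (GL (Fin n) F) where
  carrier := {M | IsUnitriangular (M : Matrix (Fin n) (Fin n) F)}
  one_mem' := by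
    constructor
    · intro i; simp
    · intro i j hij; exact Matrix.one_apply_ne (ne_of_gt hij)
  mul_mem' := by
    intro A B hA hB
    exact hA.mul hB
  inv_mem' := by
    intro M hM
    have : Invertible (M : Matrix (Fin n) (Fin n) F) := M.invertible
    have hinv : ((M⁻¹ : GL (Fin n) F) : Matrix (Fin n) (Fin n) F)
        = (M : Matrix (Fin n) (Fin n) F)⁻¹ := Matrix.coe_units_inv M
    have hbt := Matrix.blockTriangular_inv_of_blockTriangular hM.blockTriangular
    have hlow : ∀ ⦃i j : Fin n⦄, j < i →
        ((M⁻¹ : GL (Fin n) F) : Matrix (Fin n) (Fin n) F) i j = 0 := by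
      intro i j hij
      rw [hinv]; exact hbt hij
    refine ⟨?_, hlow⟩
    intro i
    rw [hinv]
    refine IsUnitriangular.diag_of_mul_eq_one (fun i j hij => hbt hij) hM ?_ i
    exact Matrix.nonsing_inv_mul _ ((Matrix.isUnit_iff_isUnit_det _).mp M.isUnit)
/-- The root subgroup `X_{(a,b)}` (as a set of elements of `UT n F`): matrices
`1 + c · e_{a,b}`. In the paper's notation the root `α_{i,j}` corresponds to the
matrix position `(i, j+1)`. -/
def rootSet (n : ℕ) (F : Type) [Field F] (a b : Fin n) : Set (UT n F) :=
  {M | ∃ c : F, ((M : GL (Fin n) F) : Matrix (Fin n) (Fin n) F)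
    = 1 + Matrix.single a b c}

/-- The set of positive roots, as matrix positions `(a, b)` with `a < b`. -/
def posRoots (n : ℕ) : Set (Fin n × Fin n) := {p | p.1 < p.2}

/-- The arm of the root at position `(a,b)`: positions `(a, c)` with `a < c < b`. -/
def arm {n : ℕ} (a b : Fin n) : Set (Fin n × Fin n) := {p | p.1 = a ∧ a < p.2 ∧ p.2 < b}

/-- The leg of the root at position `(a,b)`: positions `(c, b)` with `a < c < b`. -/
def leg {n : ℕ} (a b : Fin n) : Set (Fin n × Fin n) := {p | p.2 = b ∧ a < p.1 ∧ p.1 < b}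

/-- The hook of the root at position `(a,b)`. -/
def hook {n : ℕ} (a b : Fin n) : Set (Fin n × Fin n) := {(a, b)} ∪ arm a b ∪ leg a b

/-- Subgroup of `UT n F` generated by the root subgroups at positions in `S`. -/
def groupOf (n : ℕ) (F : Type) [Field F] (S : Set (Fin n × Fin n)) : Subgroup (UT n F) :=
  Subgroup.closure (⋃ p ∈ S, rootSet n F p.1 p.2)

/-- The hook group `H(α)` at position `(a,b)`. -/
def hookGroup (n : ℕ) (F : Type) [Field F] (a b : Fin n) : Subgroup (UT n F) :=
  groupOf n F (hook a b)

/-- The base group `V_α = ⟨X_β : β ∈ Σ⁺ \ arm(α)⟩` at position `(a,b)`. -/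
def Vgroup (n : ℕ) (F : Type) [Field F] (a b : Fin n) : Subgroup (UT n F) :=
  groupOf n F (posRoots n \ arm a b)

/-- The induced character: characters of a subgroup `H ≤ G` are recorded as functions
`G → ℂ` (only the values on `H` matter). -/
noncomputable def ind {G : Type} [Group G] (H : Subgroup G) (f : G → ℂ) : G → ℂ :=
  fun g => (Nat.card H : ℂ)⁻¹ * ∑ᶠ x : G, if x⁻¹ * g * x ∈ H then f (x⁻¹ * g * x) else 0

/-- `χ : G → ℂ` is the character of some irreducible complex representation of `G`. -/
def IsIrrChar (G : Type) [Group G] (χ : G → ℂ) : Prop :=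
  ∃ V : FDRep ℂ G, Simple V ∧ V.character = χ

/-- The standard inner product of class functions; for characters `χ`, `ψ` with `ψ`
irreducible this is the multiplicity of `ψ` in `χ`. -/
noncomputable def innerChar {G : Type} [Group G] (χ ψ : G → ℂ) : ℂ :=
  (Nat.card G : ℂ)⁻¹ * ∑ᶠ g : G, χ g * (starRingEnd ℂ) (ψ g)

/-- A datum for an elementary character at the root position `(a,b)`: a function
`f : UT n F → ℂ` which is multiplicative on `V_α` (hence a linear character of `V_α`,
automatically trivial on `[V_α, V_α]`), trivial on every root subgroup `X_β ⊆ V_α`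
with `β ≠ α`, and nontrivial on `X_α`. -/
structure IsElemDatum (n : ℕ) (F : Type) [Field F] (a b : Fin n) (f : UT n F → ℂ) : Prop where
  mul_mem : ∀ x ∈ Vgroup n F a b, ∀ y ∈ Vgroup n F a b, f (x * y) = f x * f y
  map_one : f 1 = 1
  triv : ∀ p ∈ posRoots n \ arm a b, p ≠ (a, b) → ∀ x ∈ rootSet n F p.1 p.2, f x = 1
  nontriv : ∃ x ∈ rootSet n F a b, f x ≠ 1

/-- The elementary character `λ^U` at position `(a,b)` attached to the datum `f`. -/
noncomputable def elemChar (n : ℕ) (F : Type) [Field F] (a b : Fin n) (f : UT n F → ℂ) :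
    UT n F → ℂ :=
  ind (Vgroup n F a b) f

/-- Two root positions are separate if they share no row and no column. -/
def Separate {n : ℕ} (p p' : Fin n × Fin n) : Prop := p.1 ≠ p'.1 ∧ p.2 ≠ p'.2

/-- A basic set: a nonempty set of pairwise separate positive root positions. -/
def IsBasicSet {n : ℕ} (D : Finset (Fin n × Fin n)) : Prop :=
  D.Nonempty ∧ (∀ p ∈ D, p.1 < p.2) ∧ ∀ p ∈ D, ∀ p' ∈ D, p ≠ p' → Separate p p'

/-- `ψ` is a basic character: a tensor (pointwise) product of elementary characters
over a basic set. -/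
def IsBasicChar (n : ℕ) (F : Type) [Field F] (ψ : UT n F → ℂ) : Prop :=
  ∃ (D : Finset (Fin n × Fin n)) (φ : Fin n × Fin n → (UT n F → ℂ)),
    IsBasicSet D ∧ (∀ p ∈ D, IsElemDatum n F p.1 p.2 (φ p)) ∧
      ψ = ∏ p ∈ D, elemChar n F p.1 p.2 (φ p)

/-- Maximal exponent `μ(n)`: `μ(2m) = m(m-1)`, `μ(2m+1) = m²`. -/
def muExp (n : ℕ) : ℕ := (n / 2) * ((n - 1) / 2)

/-!
A unitriangular matrix lies in the group generated by the root subgroups on its off-diagonal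
support: peel off its entries row by row, starting from the lowest nontrivial row. Hence right
multiplication by a suitable element of `X_arm(α)`, the group generated by the root subgroups on
the arm of `α`, clears the arm of any `u ∈ U`, which gives `U = V_α · X_arm(α)`. As
`X_arm(α) ≤ V_β` whenever `β` lies in another row, and the roots of a basic set lie in pairwise
distinct rows, adding `α` to a basic set `D` gives `U = V_α · V_D`.

For subgroups with `G = V W` and linear characters `λ`, `μ` of `V`, `W`, every fibre of the
multiplication map `V × W → G` has `|V ∩ W|` elements. This turns the product of the defining
sums of `λ^G` and `μ^G` into the defining sum of `(λ μ)^G` over `V ∩ W`; induction on `D`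
finishes the proof.
-/

section InducedCharacter

variable {G : Type} [Group G]

structure IsMulOn (H : Subgroup G) (f : G → ℂ) : Prop where
  map_mul : ∀ x ∈ H, ∀ y ∈ H, f (x * y) = f x * f y
  map_one : f 1 = 1

namespace IsMulOn

variable {H K : Subgroup G} {f g : G → ℂ}

lemma mul (hf : IsMulOn H f) (hg : IsMulOn K g) : IsMulOn (H ⊓ K) (f * g) where
  map_mul x hx y hy := by
    simp only [Pi.mul_apply, hf.map_mul x hx.1 y hy.1, hg.map_mul x hx.2 y hy.2]
    ring
  map_one := by simp [hf.map_one, hg.map_one]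

lemma top_one : IsMulOn (⊤ : Subgroup G) 1 := ⟨fun _ _ _ _ => (mul_one 1).symm, rfl⟩

lemma iInf_prod {ι : Type*} {V : ι → Subgroup G} {f : ι → G → ℂ} (s : Finset ι)
    (h : ∀ i ∈ s, IsMulOn (V i) (f i)) : IsMulOn (⨅ i ∈ s, V i) (∏ i ∈ s, f i) := by
  classical
  induction s using Finset.induction_on with
  | empty => simpa using top_one
  | insert i s hi ih =>
    rw [Finset.iInf_insert, Finset.prod_insert hi]
    exact (h i (s.mem_insert_self i)).mul (ih fun j hj => h j (Finset.mem_insert_of_mem hj))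

lemma map_conj (hf : IsMulOn H f) {v x : G} (hv : v ∈ H) (hx : x ∈ H) :
    f (v * x * v⁻¹) = f x := by
  have hinv : f v * f v⁻¹ = 1 := by
    rw [← hf.map_mul v hv _ (H.inv_mem hv), mul_inv_cancel, hf.map_one]
  rw [hf.map_mul _ (H.mul_mem hv hx) _ (H.inv_mem hv), hf.map_mul v hv x hx, mul_right_comm,
    hinv, one_mul]

lemma indicator_conj (hf : IsMulOn H f) {v : G} (hv : v ∈ H) (x : G) :
    (H : Set G).indicator f (v * x * v⁻¹) = (H : Set G).indicator f x := by
  by_cases hx : x ∈ H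
  · rw [Set.indicator_of_mem hx, Set.indicator_of_mem (H.mul_mem (H.mul_mem hv hx) (H.inv_mem hv)),
      hf.map_conj hv hx]
  · rw [Set.indicator_of_notMem hx, Set.indicator_of_notMem]
    rwa [SetLike.mem_coe, H.mul_mem_cancel_right (H.inv_mem hv), H.mul_mem_cancel_left hv]

end IsMulOn

lemma ind_apply [Fintype G] (H : Subgroup G) (f : G → ℂ) (t : G) :
    ind H f t = (Nat.card H : ℂ)⁻¹ * ∑ x, (H : Set G).indicator f (x⁻¹ * t * x) := by
  rw [ind, finsum_eq_sum_of_fintype]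
  rfl

lemma ind_top_one [Finite G] : ind (⊤ : Subgroup G) 1 = 1 := by
  have := Fintype.ofFinite G
  funext t
  have hG : (Fintype.card G : ℂ) ≠ 0 := Nat.cast_ne_zero.2 Fintype.card_ne_zero
  simp [ind_apply, Nat.card_eq_fintype_card, hG]

lemma card_filter_mul_eq_card_inf [Fintype G] {V W : Subgroup G} {x : G}
    (hx : ∃ v ∈ V, ∃ w ∈ W, v * w = x) :
    Finset.card {p : V × W | (p.1 : G) * p.2 = x} = Nat.card ↥(V ⊓ W) := by
  obtain ⟨v₀, hv₀, w₀, hw₀, rfl⟩ := hx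
  rw [Nat.card_eq_fintype_card, ← Fintype.card_subtype]
  refine Fintype.card_congr
    { toFun p := ⟨v₀⁻¹ * p.1.1, V.mul_mem (V.inv_mem hv₀) p.1.1.2, ?_⟩
      invFun d := ⟨(⟨v₀ * d, V.mul_mem hv₀ d.2.1⟩,
          ⟨d⁻¹ * w₀, W.mul_mem (W.inv_mem d.2.2) hw₀⟩), by simp [mul_assoc]⟩
      left_inv p := ?_
      right_inv d := by simp }
  · obtain ⟨⟨⟨v, -⟩, ⟨w, hw⟩⟩, hp⟩ := p
    have : v₀⁻¹ * v = w₀ * w⁻¹ := by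
      rw [inv_mul_eq_iff_eq_mul, ← mul_assoc, ← hp, mul_inv_cancel_right]
    rw [this]
    exact W.mul_mem hw₀ (W.inv_mem hw)
  · obtain ⟨⟨⟨v, -⟩, ⟨w, -⟩⟩, hp⟩ := p
    ext <;> simp [mul_assoc, ← hp]

lemma sum_mul_eq_card_inf_nsmul_sum [Fintype G] {M : Type*} [AddCommMonoid M]
    {V W : Subgroup G} (hVW : ∀ x, ∃ v ∈ V, ∃ w ∈ W, v * w = x) (h : G → M) :
    ∑ p : V × W, h (p.1 * p.2) = Nat.card ↥(V ⊓ W) • ∑ x, h x := by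
  rw [← Finset.sum_fiberwise' Finset.univ (fun p : V × W => (p.1 : G) * p.2) h, Finset.smul_sum]
  refine Finset.sum_congr rfl fun x _ => ?_
  rw [Finset.sum_const, card_filter_mul_eq_card_inf (hVW x)]

theorem ind_mul_ind [Finite G] {V W : Subgroup G} {f g : G → ℂ} (hf : IsMulOn V f)
    (hg : IsMulOn W g) (hVW : ∀ x, ∃ v ∈ V, ∃ w ∈ W, v * w = x) :
    ind V f * ind W g = ind (V ⊓ W) (f * g) := by
  have := Fintype.ofFinite G
  funext t
  set cV : G → ℂ := fun x => (V : Set G).indicator f (x⁻¹ * t * x)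
  set cW : G → ℂ := fun x => (W : Set G).indicator g (x⁻¹ * t * x)
  have hcV : ∀ x, ∀ v ∈ V, cV (x * v) = cV x := fun x v hv => by
    simpa [cV, mul_assoc] using hf.indicator_conj (V.inv_mem hv) (x⁻¹ * t * x)
  have hcW : ∀ x, ∀ w ∈ W, cW (x * w) = cW x := fun x w hw => by
    simpa [cW, mul_assoc] using hg.indicator_conj (W.inv_mem hw) (x⁻¹ * t * x)
  have hleft : ∀ x, ∑ y, cW (x * y) = ∑ y, cW y := fun x =>
    Equiv.sum_comp (Equiv.mulLeft x) cW
  have hright : ∀ v, ∑ x, cV (x * v) * cW (x * v) = ∑ x, cV x * cW x := fun v =>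
    Equiv.sum_comp (Equiv.mulRight v) fun x => cV x * cW x
  have key : (Nat.card ↥(V ⊓ W) : ℂ) * ((∑ x, cV x) * ∑ y, cW y)
      = Nat.card V * Nat.card W * ∑ x, cV x * cW x :=
    calc _ = ∑ x, cV x * (Nat.card ↥(V ⊓ W) • ∑ y, cW (x * y)) := by
          simp only [hleft, nsmul_eq_mul, ← Finset.sum_mul]
          ring
      _ = ∑ x, ∑ p : V × W, cV x * cW (x * (p.1 * p.2)) := by
          simp only [← sum_mul_eq_card_inf_nsmul_sum hVW, Finset.mul_sum]
      _ = ∑ p : V × W, ∑ x, cV (x * p.1) * cW (x * p.1) := by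
          rw [Finset.sum_comm]
          simp only [← mul_assoc, hcW _ _ (Subtype.prop _), hcV _ _ (Subtype.prop _)]
      _ = Nat.card V * Nat.card W * ∑ x, cV x * cW x := by
          simp only [hright, Finset.sum_const, Finset.card_univ, Fintype.card_prod, nsmul_eq_mul,
            Nat.card_eq_fintype_card, Nat.cast_mul]
  have hV : (Nat.card V : ℂ) ≠ 0 := Nat.cast_ne_zero.2 Nat.card_pos.ne'
  have hW : (Nat.card W : ℂ) ≠ 0 := Nat.cast_ne_zero.2 Nat.card_pos.ne'
  have hVW : (Nat.card ↥(V ⊓ W) : ℂ) ≠ 0 := Nat.cast_ne_zero.2 Nat.card_pos.ne'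
  have hprod : ∀ x, (V ∩ W : Set G).indicator (f * g) x
      = (V : Set G).indicator f x * (W : Set G).indicator g x :=
    Set.inter_indicator_mul f g
  simp only [Pi.mul_apply, ind_apply, Subgroup.coe_inf, hprod]
  field_simp
  linear_combination key

end InducedCharacter

namespace UT

variable {n : ℕ} {F : Type} [Field F]

def mat (M : UT n F) : Matrix (Fin n) (Fin n) F := ((M : GL (Fin n) F) : Matrix (Fin n) (Fin n) F)

@[simp] lemma mat_mul (M N : UT n F) : mat (M * N) = mat M * mat N := rfl

@[simp] lemma mat_one : mat (1 : UT n F) = 1 := rfl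

@[simp] lemma mat_apply_self (M : UT n F) (i : Fin n) : mat M i i = 1 := M.2.1 i

lemma mat_apply_of_lt (M : UT n F) {i j : Fin n} (h : j < i) : mat M i j = 0 := M.2.2 h

lemma mat_injective : Function.Injective (mat : UT n F → Matrix (Fin n) (Fin n) F) :=
  fun _ _ h => Subtype.ext (Units.ext h)

def ofMatrix (A : Matrix (Fin n) (Fin n) F) (hA : IsUnitriangular A) : UT n F :=
  ⟨GeneralLinearGroup.mkOfDetNeZero A (by
    rw [det_of_isUpperTriangular hA.blockTriangular, Finset.prod_eq_one fun i _ => hA.1 i]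
    exact one_ne_zero), hA⟩

@[simp] lemma mat_ofMatrix (A : Matrix (Fin n) (Fin n) F) (hA : IsUnitriangular A) :
    mat (ofMatrix A hA) = A := rfl

lemma isUnitriangular_one_add_single {i j : Fin n} (hij : i < j) (c : F) :
    IsUnitriangular (1 + single i j c) := by
  refine ⟨fun k => ?_, fun k l hlk => ?_⟩
  · simp only [Matrix.add_apply, one_apply_eq, single_apply, add_eq_left, ite_eq_right_iff,
      and_imp]
    rintro rfl rfl
    exact absurd hij (lt_irrefl _)
  · simp only [Matrix.add_apply, one_apply_ne hlk.ne', single_apply, zero_add,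
      ite_eq_right_iff, and_imp]
    rintro rfl rfl
    exact absurd (hij.trans hlk) (lt_irrefl _)

def rootElem {i j : Fin n} (hij : i < j) (c : F) : UT n F :=
  ofMatrix (1 + single i j c) (isUnitriangular_one_add_single hij c)

lemma rootElem_mul_rootElem {i j : Fin n} (hij : i < j) (c d : F) :
    rootElem hij c * rootElem hij d = rootElem hij (c + d) := by
  apply mat_injective
  simp only [mat_mul, rootElem, mat_ofMatrix, mul_add, add_mul, one_mul, mul_one,
    single_mul_single_of_ne _ _ _ _ hij.ne', add_zero, single_add]
  abel

lemma rootElem_zero {i j : Fin n} (hij : i < j) : rootElem hij (0 : F) = 1 :=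
  mat_injective (by simp [rootElem])

lemma rootElem_mem_groupOf {S : Set (Fin n × Fin n)} {i j : Fin n} (hij : i < j)
    (hS : (i, j) ∈ S) (c : F) : rootElem hij c ∈ groupOf n F S :=
  Subgroup.subset_closure (Set.mem_biUnion hS ⟨c, rfl⟩)

noncomputable def support (M : UT n F) : Finset (Fin n × Fin n) :=
  {p | p.1 ≠ p.2 ∧ mat M p.1 p.2 ≠ 0}

lemma mem_support {M : UT n F} {p : Fin n × Fin n} :
    p ∈ support M ↔ p.1 ≠ p.2 ∧ mat M p.1 p.2 ≠ 0 := by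
  simp [support]

lemma support_subset_posRoots (M : UT n F) : ↑(support M) ⊆ posRoots n := fun p hp => by
  rw [Finset.mem_coe, mem_support] at hp
  exact lt_of_le_of_ne (not_lt.1 fun h => hp.2 (mat_apply_of_lt M h)) hp.1

lemma eq_one_of_support_eq_empty {M : UT n F} (hM : support M = ∅) : M = 1 := by
  refine mat_injective (Matrix.ext fun i j => ?_)
  by_cases hij : i = j
  · simp [hij]
  · have : (i, j) ∉ support M := hM ▸ Finset.notMem_empty _
    simpa [mem_support, hij, one_apply_ne hij] using this

lemma support_rootElem_mul_of_max {M : UT n F} {i j : Fin n} (hij : i < j)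
    (hp : (i, j) ∈ support M) (hmax : ∀ q ∈ support M, q.1 ≤ i) :
    support (rootElem hij (-mat M i j) * M) = (support M).erase (i, j) := by
  -- Row `j` of `M` is that of `1`, so left multiplication by `rootElem` only changes `(i, j)`.
  have hrow : ∀ k, mat M j k = (1 : Matrix (Fin n) (Fin n) F) j k := by
    intro k
    by_cases hjk : j = k
    · subst hjk
      simp
    · rw [one_apply_ne hjk]
      by_contra h
      exact absurd (hmax (j, k) (mem_support.2 ⟨hjk, h⟩)) (not_le.2 hij)
  have hsingle : single i j (-mat M i j) * mat M = single i j (-mat M i j) := by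
    ext r k
    by_cases hr : r = i
    · rw [hr, single_mul_apply_same, hrow, one_apply, single_apply]
      simp
    · rw [single_mul_apply_of_ne _ _ _ _ _ hr]
      simp [Ne.symm hr]
  ext ⟨r, k⟩
  simp only [mem_support, Finset.mem_erase, mat_mul, rootElem, mat_ofMatrix, add_mul, one_mul,
    hsingle, Matrix.add_apply, single_apply]
  by_cases hrk : r = i ∧ k = j
  · obtain ⟨rfl, rfl⟩ := hrk
    simp
  · rw [if_neg fun h => hrk ⟨h.1.symm, h.2.symm⟩, add_zero]
    simp [hrk]

theorem mem_groupOf_of_support_subset {S : Set (Fin n × Fin n)} {M : UT n F}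
    (hM : ↑(support M) ⊆ S) : M ∈ groupOf n F S := by
  induction hs : support M using Finset.strongInduction generalizing M with
  | H s ih =>
  subst hs
  rcases (support M).eq_empty_or_nonempty with h | hne
  · rw [eq_one_of_support_eq_empty h]
    exact one_mem _
  obtain ⟨⟨i, j⟩, hp, hmax⟩ := (support M).exists_max_image Prod.fst hne
  have hij : i < j := support_subset_posRoots M hp
  have hsupp := support_rootElem_mul_of_max hij hp hmax
  have hM' : M = rootElem hij (mat M i j) * (rootElem hij (-mat M i j) * M) := by
    rw [← mul_assoc, rootElem_mul_rootElem, add_neg_cancel, rootElem_zero, one_mul]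
  rw [hM']
  refine mul_mem (rootElem_mem_groupOf hij (hM hp) _) (ih _ ?_ (hsupp ▸ ?_) hsupp)
  · exact Finset.erase_ssubset hp
  · exact (Finset.coe_subset.2 (Finset.erase_subset _ _)).trans hM

lemma mem_Vgroup_of_eq_zero_on_arm {a b : Fin n} {M : UT n F}
    (h : ∀ p ∈ arm a b, mat M p.1 p.2 = 0) :
    M ∈ Vgroup n F a b :=
  mem_groupOf_of_support_subset fun p hp =>
    ⟨support_subset_posRoots M hp, fun harm => (mem_support.1 hp).2 (h p harm)⟩

noncomputable def armPart (M : UT n F) (a b : Fin n) : Matrix (Fin n) (Fin n) F :=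
  Matrix.of fun r k => if (r, k) ∈ arm a b then mat M r k else 0

lemma isUnitriangular_one_sub_armPart (M : UT n F) (a b : Fin n) :
    IsUnitriangular (1 - armPart M a b) := by
  refine ⟨fun r => ?_, fun r k hkr => ?_⟩
  · have : (r, r) ∉ arm a b := by
      rintro ⟨rfl, h, -⟩
      exact lt_irrefl _ h
    simp [armPart, this]
  · have : (r, k) ∉ arm a b := by
      rintro ⟨rfl, h, -⟩
      exact absurd hkr (not_lt.2 h.le)
    simp [armPart, this, one_apply_ne hkr.ne']

noncomputable def armClearer (M : UT n F) (a b : Fin n) : UT n F :=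
  ofMatrix (1 - armPart M a b) (isUnitriangular_one_sub_armPart M a b)

lemma armClearer_mem_groupOf_arm (M : UT n F) (a b : Fin n) :
    armClearer M a b ∈ groupOf n F (arm a b) := by
  refine mem_groupOf_of_support_subset fun p hp => ?_
  rw [Finset.mem_coe, mem_support] at hp
  by_contra harm
  simp [armClearer, armPart, harm, one_apply_ne hp.1] at hp

lemma mat_mul_armClearer_eq_zero_of_mem_arm (M : UT n F) {a b : Fin n} {p : Fin n × Fin n}
    (hp : p ∈ arm a b) : mat (M * armClearer M a b) p.1 p.2 = 0 := by
  obtain ⟨r, k⟩ := p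
  obtain ⟨rfl, hrk, hkb⟩ := hp
  have hsum : ∑ l, mat M r l * armPart M r b l k = mat M r k := by
    rw [Finset.sum_eq_single r]
    · simp [armPart, arm, hrk, hkb]
    · intro l _ hl
      simp [armPart, arm, hl]
    · simp
  rw [mat_mul, armClearer, mat_ofMatrix, Matrix.mul_sub, Matrix.mul_one, Matrix.sub_apply,
    Matrix.mul_apply, hsum, sub_self]

theorem exists_mem_Vgroup_mem_groupOf_arm_mul_eq (M : UT n F) (a b : Fin n) :
    ∃ v ∈ Vgroup n F a b, ∃ w ∈ groupOf n F (arm a b), v * w = M :=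
  ⟨M * armClearer M a b,
    mem_Vgroup_of_eq_zero_on_arm fun _ hp => mat_mul_armClearer_eq_zero_of_mem_arm M hp,
    (armClearer M a b)⁻¹, inv_mem (armClearer_mem_groupOf_arm M a b), mul_inv_cancel_right _ _⟩

lemma groupOf_mono {S T : Set (Fin n × Fin n)} (h : S ⊆ T) :
    groupOf n F S ≤ groupOf n F T :=
  Subgroup.closure_mono (Set.biUnion_subset_biUnion_left h)

lemma arm_subset_posRoots (a b : Fin n) : arm a b ⊆ posRoots n := by
  rintro ⟨r, k⟩ ⟨rfl, h, -⟩
  exact h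

lemma groupOf_arm_le_Vgroup {a b a' b' : Fin n} (h : a ≠ a') :
    groupOf n F (arm a b) ≤ Vgroup n F a' b' :=
  groupOf_mono fun _ hp => ⟨arm_subset_posRoots a b hp, fun hp' => h (hp.1.symm.trans hp'.1)⟩

end UT

theorem prod_ind_Vgroup_eq_ind_iInf {n : ℕ} {F : Type} [Field F] [Finite F]
    (E : Finset (Fin n × Fin n)) (hE : Set.InjOn Prod.fst (E : Set (Fin n × Fin n)))
    (phi : Fin n × Fin n → UT n F → ℂ)
    (hphi : ∀ p ∈ E, IsMulOn (Vgroup n F p.1 p.2) (phi p)) :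
    ∏ p ∈ E, ind (Vgroup n F p.1 p.2) (phi p)
      = ind (⨅ p ∈ E, Vgroup n F p.1 p.2) (∏ p ∈ E, phi p) := by
  induction E using Finset.induction_on with
  | empty => simp [ind_top_one]
  | insert q E hq ih =>
    have hphiE : ∀ p ∈ E, IsMulOn (Vgroup n F p.1 p.2) (phi p) := fun p hp =>
      hphi p (Finset.mem_insert_of_mem hp)
    have hrow : ∀ p ∈ E, q.1 ≠ p.1 := fun p hp h =>
      hq (hE (Finset.mem_insert_self q E) (Finset.mem_insert_of_mem hp) h ▸ hp)
    rw [Finset.prod_insert hq, Finset.prod_insert hq, Finset.iInf_insert,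
      ih (hE.mono (by simp)) hphiE]
    refine ind_mul_ind (hphi q (Finset.mem_insert_self q E)) (IsMulOn.iInf_prod E hphiE) fun u => ?_
    obtain ⟨v, hv, w, hw, rfl⟩ := UT.exists_mem_Vgroup_mem_groupOf_arm_mul_eq u q.1 q.2
    exact ⟨v, hv, w, (le_iInf₂ fun p hp => UT.groupOf_arm_le_Vgroup (hrow p hp)) hw, rfl⟩

/-- A basic character `ξ_{D,φ} = ⊗_{α ∈ D} λ_α^U` equals the character induced from
the linear character `⊗_{α∈D} λ_α|_{V_D}` of the subgroup `V_D = ∩_{α∈D} V_α`; in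
particular every basic character is induced from a linear character of a subgroup. -/
theorem basicChar_monomial (n : ℕ) (F : Type) [Field F] [Fintype F]
    (D : Finset (Fin n × Fin n)) (hD : IsBasicSet D)
    (phi : Fin n × Fin n → (UT n F → ℂ))
    (hphi : ∀ p ∈ D, IsElemDatum n F p.1 p.2 (phi p)) :
    ∏ p ∈ D, elemChar n F p.1 p.2 (phi p)
      = ind (⨅ p ∈ D, Vgroup n F p.1 p.2) (∏ p ∈ D, phi p) := by
  have hrows : Set.InjOn Prod.fst (D : Set (Fin n × Fin n)) := fun p hp p' hp' h =>
    by_contra fun hne => (hD.2.2 p hp p' hp' hne).1 h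
  exact prod_ind_Vgroup_eq_ind_iInf D hrows phi fun p hp =>
    ⟨(hphi p hp).mul_mem, (hphi p hp).map_one⟩
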